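/- arXiv:1409.3660 — 2 statements merged into one kernel-verified Lean document; each statement's English description precedes it below -/
import Mathlib

section
/- Let X be an L×N real matrix, V an N×N diagonal matrix with strictly positive diagonal entries, β > 0, and P an L×N real matrix. Then V + β XᵀX is invertible and β (V + β XᵀX)⁻¹ Xᵀ P = β (X V⁻¹)ᵀ (I_L + β X (X V⁻¹)ᵀ)⁻¹ P. -/
open Matrix

theorem arss_theorem1 (L N : ℕ) (X P : Matrix (Fin L) (Fin N) ℝ)
    (V : Matrix (Fin N) (Fin N) ℝ) (hVdiag : ∀ i j, i ≠ j → V i j = 0)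
    (hVpos : ∀ i, 0 < V i i) (β : ℝ) (hβ : 0 < β) :
    IsUnit (V + β • (Xᵀ * X)) ∧
    β • ((V + β • (Xᵀ * X))⁻¹ * Xᵀ * P)
      = β • ((X * V⁻¹)ᵀ * ((1 : Matrix (Fin L) (Fin L) ℝ) + β • (X * (X * V⁻¹)ᵀ))⁻¹ * P) := by
  have hVd : V = Matrix.diagonal (fun i => V i i) := by
    ext i j
    by_cases h : i = j
    · subst h; simp
    · simp [Matrix.diagonal_apply_ne _ h, hVdiag i j h]
  have hV : V.PosDef := by
    rw [hVd]; exact Matrix.PosDef.diagonal hVpos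
  have hVsymm : Vᵀ = V := by
    rw [hVd]; exact Matrix.diagonal_transpose _
  have hVinv : (V⁻¹).PosDef := hV.inv
  set Y : Matrix (Fin L) (Fin N) ℝ := Real.sqrt β • X with hY
  have hYY : Yᵀ * Y = β • (Xᵀ * X) := by
    rw [hY, Matrix.transpose_smul, Matrix.smul_mul, Matrix.mul_smul, smul_smul,
      Real.mul_self_sqrt hβ.le]
  have hYVY : Y * V⁻¹ * Yᵀ = β • (X * V⁻¹ * Xᵀ) := by
    rw [hY, Matrix.transpose_smul, Matrix.smul_mul, Matrix.smul_mul, Matrix.mul_smul,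
      smul_smul, Real.mul_self_sqrt hβ.le]
  have hA : (V + β • (Xᵀ * X)).PosDef := by
    refine hV.add_posSemidef ?_
    rw [← hYY]
    have := Matrix.posSemidef_conjTranspose_mul_self Y
    simpa using this
  have hInvXt : (X * V⁻¹)ᵀ = V⁻¹ * Xᵀ := by
    rw [Matrix.transpose_mul, Matrix.transpose_nonsing_inv, hVsymm]
  have hXVX : X * (X * V⁻¹)ᵀ = X * V⁻¹ * Xᵀ := by
    rw [hInvXt, Matrix.mul_assoc]
  have hB : ((1 : Matrix (Fin L) (Fin L) ℝ) + β • (X * V⁻¹ * Xᵀ)).PosDef := by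
    refine Matrix.PosDef.add_posSemidef Matrix.PosDef.one ?_
    rw [← hYVY]
    have := hVinv.posSemidef.mul_mul_conjTranspose_same Y
    simpa [Matrix.mul_assoc] using this
  refine ⟨hA.isUnit, ?_⟩
  rw [hXVX, hInvXt]
  have hAunit : IsUnit (V + β • (Xᵀ * X)).det := (Matrix.isUnit_iff_isUnit_det _).mp hA.isUnit
  have hBunit : IsUnit ((1 : Matrix (Fin L) (Fin L) ℝ) + β • (X * V⁻¹ * Xᵀ)).det :=
    (Matrix.isUnit_iff_isUnit_det _).mp hB.isUnit
  have key : (V + β • (Xᵀ * X)) * (V⁻¹ * Xᵀ)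
      = Xᵀ * ((1 : Matrix (Fin L) (Fin L) ℝ) + β • (X * V⁻¹ * Xᵀ)) := by
    rw [Matrix.add_mul, Matrix.mul_add, ← Matrix.mul_assoc,
      Matrix.mul_nonsing_inv _ ((Matrix.isUnit_iff_isUnit_det _).mp hV.isUnit), Matrix.one_mul, Matrix.mul_one,
      Matrix.smul_mul, Matrix.mul_smul]
    simp [Matrix.mul_assoc]
  have main : (V + β • (Xᵀ * X))⁻¹ * Xᵀ
      = V⁻¹ * Xᵀ * ((1 : Matrix (Fin L) (Fin L) ℝ) + β • (X * V⁻¹ * Xᵀ))⁻¹ := by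
    have := congrArg (fun M => (V + β • (Xᵀ * X))⁻¹ * M
        * ((1 : Matrix (Fin L) (Fin L) ℝ) + β • (X * V⁻¹ * Xᵀ))⁻¹) key
    simp only [← Matrix.mul_assoc] at this
    rw [Matrix.nonsing_inv_mul _ hAunit, Matrix.one_mul] at this
    rw [this, Matrix.mul_assoc, Matrix.mul_assoc,
      Matrix.mul_nonsing_inv _ hBunit, Matrix.mul_one]
  rw [main, Matrix.mul_assoc]
end

section
/- Let X be an L×N real matrix, V an N×N diagonal matrix with positive diagonal entries, γ > 0, u > 0 a scalar, and x ∈ ℝ^L. Then u XᵀX + γ V is invertible, u X(XV⁻¹)ᵀ + γ I_L is invertible, and u (u XᵀX + γ V)⁻¹ Xᵀ x = u (X V⁻¹)ᵀ (u X (X V⁻¹)ᵀ + γ I_L)⁻¹ x. -/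
/-!
Let `A = u XᵀX + γV` and `B = u X V⁻¹Xᵀ + γI`. Both are positive definite (`V ≻ 0`, the Gram-type
matrices `XᵀX` and `X V⁻¹ Xᵀ` are `⪰ 0`, and `γ > 0`), hence invertible. The push-through identity
`A (V⁻¹Xᵀ) = Xᵀ B` then gives `A⁻¹Xᵀ = V⁻¹Xᵀ B⁻¹`, and `V⁻¹Xᵀ = (XV⁻¹)ᵀ` because `V` is symmetric.
-/

open Matrix

variable {m n : Type*}

theorem Matrix.IsDiag.posDef [DecidableEq n] {R : Type*} [Ring R] [PartialOrder R] [StarRing R]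
    [StarOrderedRing R] [NoZeroDivisors R] {A : Matrix n n R} (hA : A.IsDiag)
    (hpos : ∀ i, 0 < A i i) : A.PosDef :=
  hA.diagonal_diag ▸ PosDef.diagonal hpos

theorem Matrix.PosSemidef.smul_add_smul_posDef {M D : Matrix n n ℝ} (hM : M.PosSemidef)
    (hD : D.PosDef) {u γ : ℝ} (hu : 0 ≤ u) (hγ : 0 < γ) : (u • M + γ • D).PosDef :=
  PosDef.posSemidef_add (hM.smul hu) (hD.smul hγ)

theorem Matrix.PosSemidef.mul_mul_transpose_inv_transpose [Fintype m] [Fintype n]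
    [DecidableEq n] {V : Matrix n n ℝ} (hV : V.PosSemidef) (X : Matrix m n ℝ) :
    (X * (X * V⁻¹)ᵀ).PosSemidef := by
  rw [transpose_mul, transpose_nonsing_inv, ← conjTranspose_eq_transpose_of_trivial,
    hV.isHermitian.eq, ← Matrix.mul_assoc, ← conjTranspose_eq_transpose_of_trivial]
  exact hV.inv.mul_mul_conjTranspose_same X

theorem Matrix.smul_transpose_mul_self_add_smul_mul [Fintype m] [Fintype n] [DecidableEq m]
    {R : Type*} [CommRing R] (X : Matrix m n R) (V : Matrix n n R) {W : Matrix n m R}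
    (hW : V * W = Xᵀ) (u γ : R) :
    (u • (Xᵀ * X) + γ • V) * W = Xᵀ * (u • (X * W) + γ • 1) := by
  rw [Matrix.add_mul, Matrix.mul_add, Matrix.smul_mul, Matrix.smul_mul, Matrix.mul_smul,
    Matrix.mul_smul, Matrix.mul_one, hW, Matrix.mul_assoc]

theorem Matrix.inv_mul_eq_mul_inv_of_mul_eq [Fintype m] [Fintype n] [DecidableEq m]
    [DecidableEq n] {K : Type*} [CommRing K] {A : Matrix n n K} {B : Matrix m m K}
    {P Q : Matrix n m K} (hA : IsUnit A) (hB : IsUnit B) (h : A * P = Q * B) :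
    A⁻¹ * Q = P * B⁻¹ := by
  have := hA.invertible
  have := hB.invertible
  rw [inv_mul_eq_iff_eq_mul_of_invertible, ← Matrix.mul_assoc, h,
    mul_inv_cancel_right_of_invertible]

theorem arss_theorem2 (L N : ℕ) (X : Matrix (Fin L) (Fin N) ℝ)
    (V : Matrix (Fin N) (Fin N) ℝ) (hVdiag : ∀ i j, i ≠ j → V i j = 0)
    (hVpos : ∀ i, 0 < V i i) (γ u : ℝ) (hγ : 0 < γ) (hu : 0 < u) (x : Fin L → ℝ) :
    IsUnit (u • (Xᵀ * X) + γ • V) ∧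
    IsUnit (u • (X * (X * V⁻¹)ᵀ) + γ • (1 : Matrix (Fin L) (Fin L) ℝ)) ∧
    u • ((u • (Xᵀ * X) + γ • V)⁻¹ * Xᵀ).mulVec x
      = u • ((X * V⁻¹)ᵀ * (u • (X * (X * V⁻¹)ᵀ) + γ • (1 : Matrix (Fin L) (Fin L) ℝ))⁻¹).mulVec x := by
  replace hVdiag : V.IsDiag := fun i j => hVdiag i j
  have hV : V.PosDef := hVdiag.posDef hVpos
  have hXX : (Xᵀ * X).PosSemidef := by
    simpa only [conjTranspose_eq_transpose_of_trivial] using posSemidef_conjTranspose_mul_self X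
  have hA := hXX.smul_add_smul_posDef hV hu.le hγ
  have hB := (hV.posSemidef.mul_mul_transpose_inv_transpose X).smul_add_smul_posDef
    PosDef.one hu.le hγ
  have hVW : V * (X * V⁻¹)ᵀ = Xᵀ := by
    rw [transpose_mul, transpose_nonsing_inv, hVdiag.isSymm.eq, ← Matrix.mul_assoc,
      mul_nonsing_inv _ ((isUnit_iff_isUnit_det V).mp hV.isUnit), Matrix.one_mul]
  refine ⟨hA.isUnit, hB.isUnit, ?_⟩
  rw [inv_mul_eq_mul_inv_of_mul_eq hA.isUnit hB.isUnit
    (smul_transpose_mul_self_add_smul_mul X V hVW u γ)]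
end
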